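/- arXiv:1904.00725 — 5 statements merged into one kernel-verified Lean document; each statement's English description precedes it below -/
import Mathlib

section
/- Let σ be a permutation of {1,…,n} with #(σ) = k cycles, let i₁,…,i_k be distinct elements of {1,…,n}, and let ρ = σ∘(i₁,i₂)∘(i₁,i₃)∘…∘(i₁,i_k) (composition with the transpositions (i₁,i_j) for 2 ≤ j ≤ k). Then |ℓ(ρ) − ℓ(σ)| ≤ #(σ). -/
/- Right multiplication by `π` only moves the entries at positions in the support of `π`; an
increasing subsequence of `σ` therefore keeps all but at most `#π.support` of its terms in
`σ * π`, and symmetrically for `π⁻¹`. The product of the transpositions `(i₁, i_j)` moves only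
the `#(σ)` points `i_j`. -/

/-- Length of the longest increasing subsequence of a permutation of `{1,…,n}`. -/
noncomputable def lisLen {n : ℕ} (σ : Equiv.Perm (Fin n)) : ℕ :=
  sSup {k : ℕ | ∃ f : Fin k → Fin n, StrictMono f ∧ StrictMono fun l => σ (f l)}

/-- The number of cycles of a permutation, counting fixed points as cycles of length 1. -/
def numCycles {n : ℕ} (σ : Equiv.Perm (Fin n)) : ℕ :=
  σ.cycleType.card + (Finset.univ.filter fun x => σ x = x).card

open Equiv Finset

namespace Equiv.Perm

variable {α : Type*} [DecidableEq α] [Fintype α]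

theorem support_swap_subset (a b : α) : (swap a b).support ⊆ {a, b} := by
  by_cases h : a = b
  · simp [h]
  · rw [support_swap h]

theorem support_list_prod_subset {l : List (Perm α)} {s : Finset α}
    (h : ∀ g ∈ l, g.support ⊆ s) : l.prod.support ⊆ s := by
  induction l with
  | nil => simp
  | cons g l ih =>
    rw [List.prod_cons]
    refine (support_mul_le g l.prod).trans (sup_le (h g List.mem_cons_self) (ih ?_))
    exact fun g' hg' => h g' (List.mem_cons_of_mem _ hg')

end Equiv.Perm

section LongestIncreasingSubsequence

variable {n : ℕ}

theorem le_lisLen {σ : Perm (Fin n)} {k : ℕ} (f : Fin k → Fin n) (hf : StrictMono f)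
    (hσf : StrictMono fun l => σ (f l)) : k ≤ lisLen σ := by
  refine le_csSup ⟨n, ?_⟩ ⟨f, hf, hσf⟩
  rintro m ⟨g, hg, -⟩
  simpa using Fintype.card_le_of_injective g hg.injective

theorem lisLen_le_lisLen_mul_add_card_support (σ π : Perm (Fin n)) :
    lisLen σ ≤ lisLen (σ * π) + #π.support := by
  refine csSup_le ⟨0, Fin.elim0, fun a => a.elim0, fun a => a.elim0⟩ ?_
  rintro m ⟨f, hf, hσf⟩
  set fixed : Finset (Fin m) := univ.filter fun l => f l ∉ π.support
  have hmoved : #(univ.filter fun l => f l ∈ π.support) ≤ #π.support :=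
    card_le_card_of_injOn f (fun l hl => by simpa using hl) hf.injective.injOn
  have hsplit : #(univ.filter fun l => f l ∈ π.support) + #fixed = m := by
    rw [card_filter_add_card_filter_not, card_univ, Fintype.card_fin]
  let e := fixed.orderEmbOfFin rfl
  have hπ (l : Fin #fixed) : π (f (e l)) = f (e l) :=
    Perm.notMem_support.mp (mem_filter.mp (fixed.orderEmbOfFin_mem rfl l)).2
  have hfixed : #fixed ≤ lisLen (σ * π) := by
    refine le_lisLen (f ∘ e) (hf.comp e.strictMono) fun a b hab => ?_
    simpa only [Function.comp_apply, Perm.mul_apply, hπ] using hσf (e.strictMono hab)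
  omega

theorem abs_lisLen_mul_sub_lisLen_le (σ π : Perm (Fin n)) :
    |(lisLen (σ * π) : ℤ) - lisLen σ| ≤ #π.support := by
  have hσ := lisLen_le_lisLen_mul_add_card_support σ π
  have hσπ := lisLen_le_lisLen_mul_add_card_support (σ * π) π⁻¹
  rw [mul_inv_cancel_right, Perm.support_inv] at hσπ
  rw [abs_sub_le_iff]
  omega

end LongestIncreasingSubsequence

theorem abs_lis_sub_lis_merge_le_numCycles_general
    (n : ℕ) (σ : Equiv.Perm (Fin n))
    (i : Fin (numCycles σ) → Fin n)
    (hk : 0 < numCycles σ)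
    (ρ : Equiv.Perm (Fin n))
    (hρ : ρ = σ * (((List.finRange (numCycles σ)).drop 1).map
      fun j => Equiv.swap (i ⟨0, hk⟩) (i j)).prod) :
    |(lisLen ρ : ℤ) - (lisLen σ : ℤ)| ≤ (numCycles σ : ℤ) := by
  set π : Perm (Fin n) := (((List.finRange (numCycles σ)).drop 1).map
    fun j => swap (i ⟨0, hk⟩) (i j)).prod
  have hsupport : π.support ⊆ univ.image i := by
    refine Perm.support_list_prod_subset fun g hg => ?_
    obtain ⟨j, -, rfl⟩ := List.mem_map.mp hg
    refine (Perm.support_swap_subset _ _).trans ?_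
    simp [insert_subset_iff]
  have hcard : #π.support ≤ numCycles σ :=
    (card_le_card hsupport).trans (card_image_le.trans (by simp))
  rw [hρ]
  exact (abs_lisLen_mul_sub_lisLen_le σ π).trans (by exact_mod_cast hcard)

/-- Let `σ` be a permutation of `{1,…,n}` with `k = #(σ)` cycles, `i₁,…,i_k` distinct
elements, and `ρ = σ∘(i₁,i₂)∘(i₁,i₃)∘…∘(i₁,i_k)`. Then `|ℓ(ρ) − ℓ(σ)| ≤ #(σ)`. -/
theorem abs_lis_sub_lis_merge_le_numCycles
    (n : ℕ) (σ : Equiv.Perm (Fin n))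
    (i : Fin (numCycles σ) → Fin n) (hi : Function.Injective i)
    (hk : 0 < numCycles σ)
    (ρ : Equiv.Perm (Fin n))
    (hρ : ρ = σ * (((List.finRange (numCycles σ)).drop 1).map
      fun j => Equiv.swap (i ⟨0, hk⟩) (i j)).prod) :
    |(lisLen ρ : ℤ) - (lisLen σ : ℤ)| ≤ (numCycles σ : ℤ) :=
  abs_lis_sub_lis_merge_le_numCycles_general n σ i hk ρ hρ
end

section
/- Let σ be a permutation of {1,…,n} with #(σ) = k cycles, let i₁,…,i_k be distinct elements of {1,…,n}, and let ρ = σ∘(i₁,i₂)∘(i₁,i₃)∘…∘(i₁,i_k). Then for every l ≥ 1, |G_l(σ) − G_l(ρ)| ≤ #(σ). -/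
/-- `greene σ l` is the maximum cardinality of a subset of `{1,…,n}` that is a union of `l`
subsets on each of which `σ` is increasing. By Greene's theorem it equals the sum of the first
`l` rows of the Robinson–Schensted shape of `σ`. -/
noncomputable def greene {n : ℕ} (σ : Equiv.Perm (Fin n)) (l : ℕ) : ℕ :=
  sSup {k : ℕ | ∃ t : Fin l → Finset (Fin n),
    (∀ m : Fin l, ∀ i ∈ t m, ∀ j ∈ t m, i < j → σ i < σ j) ∧
    (Finset.univ.biUnion t).card = k}

/-!
Removing a set `S` from each of `l` increasing subsets for `σ` leaves `l` increasing subsets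
for any `ρ` that agrees with `σ` off `S`, and costs at most `#S` elements of their union; so
`G_l(σ) ≤ G_l(ρ) + #S`, and symmetrically. The product of transpositions defining `ρ` moves
only the `#(σ)` points `i₁, …, i_k`.
-/

open Finset

section Greene

variable {n : ℕ}

lemma card_biUnion_le_greene {σ : Equiv.Perm (Fin n)} {l : ℕ} (t : Fin l → Finset (Fin n))
    (ht : ∀ m, StrictMonoOn σ (t m)) : #(univ.biUnion t) ≤ greene σ l := by
  refine le_csSup ⟨n, ?_⟩ ⟨t, ht, rfl⟩
  rintro _ ⟨t', -, rfl⟩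
  exact card_le_univ _ |>.trans_eq (Fintype.card_fin n)

lemma exists_card_biUnion_eq_greene (σ : Equiv.Perm (Fin n)) (l : ℕ) :
    ∃ t : Fin l → Finset (Fin n), (∀ m, StrictMonoOn σ (t m)) ∧ #(univ.biUnion t) = greene σ l := by
  have hempty : (∀ m : Fin l, StrictMonoOn σ ↑(∅ : Finset (Fin n))) ∧
      #(univ.biUnion fun _ : Fin l => (∅ : Finset (Fin n))) = 0 := by
    simp [StrictMonoOn, eq_empty_iff_forall_notMem]
  refine Nat.sSup_mem (s := {k | ∃ t : Fin l → Finset (Fin n),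
    (∀ m, StrictMonoOn σ (t m)) ∧ #(univ.biUnion t) = k}) ⟨0, _, hempty⟩ ⟨n, ?_⟩
  rintro _ ⟨t, -, rfl⟩
  exact card_le_univ _ |>.trans_eq (Fintype.card_fin n)

lemma greene_le_greene_add_card {σ ρ : Equiv.Perm (Fin n)} {S : Finset (Fin n)}
    (h : ∀ x ∉ S, σ x = ρ x) (l : ℕ) : greene σ l ≤ greene ρ l + #S := by
  obtain ⟨t, ht, hcard⟩ := exists_card_biUnion_eq_greene σ l
  have hρ : ∀ m, StrictMonoOn ρ ↑(t m \ S) := fun m a ha b hb hab => by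
    simp only [coe_sdiff, Set.mem_sdiff, mem_coe] at ha hb
    rw [← h a ha.2, ← h b hb.2]
    exact ht m ha.1 hb.1 hab
  have hsub : univ.biUnion t \ S ⊆ univ.biUnion fun m => t m \ S := by
    intro x
    simp only [mem_sdiff, mem_biUnion, mem_univ, true_and]
    rintro ⟨⟨m, hm⟩, hxS⟩
    exact ⟨m, hm, hxS⟩
  calc greene σ l = #(univ.biUnion t) := hcard.symm
    _ ≤ #(univ.biUnion t \ S) + #S := card_le_card_sdiff_add_card
    _ ≤ greene ρ l + #S := by
      gcongr
      exact (card_le_card hsub).trans (card_biUnion_le_greene _ hρ)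

lemma abs_greene_sub_greene_le_card {σ ρ : Equiv.Perm (Fin n)} {S : Finset (Fin n)}
    (h : ∀ x ∉ S, σ x = ρ x) (l : ℕ) : |(greene σ l : ℤ) - greene ρ l| ≤ #S := by
  have h₁ := greene_le_greene_add_card h l
  have h₂ := greene_le_greene_add_card (fun x hx => (h x hx).symm) l
  rw [abs_sub_le_iff]
  omega

end Greene

lemma List.prod_apply_eq_self_of_forall {α : Type*} {L : List (Equiv.Perm α)} {x : α}
    (h : ∀ p ∈ L, p x = x) : L.prod x = x :=
  Subgroup.list_prod_mem (K := MulAction.stabilizer (Equiv.Perm α) x) h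

theorem abs_greene_sub_greene_merge_le_numCycles_general
    (n : ℕ) (σ : Equiv.Perm (Fin n))
    (i : Fin (numCycles σ) → Fin n)
    (hk : 0 < numCycles σ)
    (ρ : Equiv.Perm (Fin n))
    (hρ : ρ = σ * (((List.finRange (numCycles σ)).drop 1).map
      fun j => Equiv.swap (i ⟨0, hk⟩) (i j)).prod)
    (l : ℕ) :
    |(greene σ l : ℤ) - (greene ρ l : ℤ)| ≤ (numCycles σ : ℤ) := by
  have hagree : ∀ x ∉ univ.image i, σ x = ρ x := by
    intro x hx
    have hx_ne : ∀ j, i j ≠ x := fun j hj => hx (mem_image.2 ⟨j, mem_univ _, hj⟩)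
    rw [hρ, Equiv.Perm.mul_apply, List.prod_apply_eq_self_of_forall]
    simp only [List.mem_map]
    rintro _ ⟨j, -, rfl⟩
    exact Equiv.swap_apply_of_ne_of_ne (hx_ne _).symm (hx_ne j).symm
  have hcard : #(univ.image i) ≤ numCycles σ := card_image_le.trans (by simp)
  exact (abs_greene_sub_greene_le_card hagree l).trans (by exact_mod_cast hcard)

/-- Let `σ` be a permutation of `{1,…,n}` with `k = #(σ)` cycles, `i₁,…,i_k` distinct
elements, and `ρ = σ∘(i₁,i₂)∘(i₁,i₃)∘…∘(i₁,i_k)`. Then for every `l ≥ 1`,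
`|G_l(σ) − G_l(ρ)| ≤ #(σ)`. -/
theorem abs_greene_sub_greene_merge_le_numCycles
    (n : ℕ) (σ : Equiv.Perm (Fin n))
    (i : Fin (numCycles σ) → Fin n) (hi : Function.Injective i)
    (hk : 0 < numCycles σ)
    (ρ : Equiv.Perm (Fin n))
    (hρ : ρ = σ * (((List.finRange (numCycles σ)).drop 1).map
      fun j => Equiv.swap (i ⟨0, hk⟩) (i j)).prod)
    (l : ℕ) (hl : 1 ≤ l) :
    |(greene σ l : ℤ) - (greene ρ l : ℤ)| ≤ (numCycles σ : ℤ) :=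
  abs_greene_sub_greene_merge_le_numCycles_general n σ i hk ρ hρ l
end

section
/- Let σ₁, σ₂ be permutations of {1,…,n}, let #(σ₁) = k, let i₁,…,i_k be distinct elements of {1,…,n}, and let ρ = σ₁∘(i₁,i₂)∘(i₁,i₃)∘…∘(i₁,i_k). Then |LCS(σ₁,σ₂) − LCS(ρ,σ₂)| ≤ #(σ₁). -/
/-!
Every transposition `(i₁, i_j)` fixes the points outside `D = {i₁, …, i_k}`, so `ρ` agrees with `σ₁`
off `D`. Dropping from a common subsequence of `σ₁` and `σ₂` the (at most `|D|`) terms read at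
positions in `D` leaves a common subsequence of `ρ` and `σ₂`, and symmetrically; hence the two LCS
lengths differ by at most `|D| ≤ k`.
-/

/-- Length of the longest common subsequence of two permutations of `{1,…,n}`. -/
noncomputable def lcsLen {n : ℕ} (σ₁ σ₂ : Equiv.Perm (Fin n)) : ℕ :=
  sSup {k : ℕ | ∃ f g : Fin k → Fin n, StrictMono f ∧ StrictMono g ∧ ∀ l, σ₁ (f l) = σ₂ (g l)}

open Equiv Finset

lemma Equiv.Perm.list_prod_apply_eq_self {α : Type*} {l : List (Perm α)} {x : α}
    (h : ∀ p ∈ l, p x = x) : l.prod x = x :=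
  (MulAction.stabilizer (Perm α) x).list_prod_mem h

section lcsLen

variable {n : ℕ}

lemma le_lcsLen {σ₁ σ₂ : Perm (Fin n)} {k : ℕ} {f g : Fin k → Fin n} (hf : StrictMono f)
    (hg : StrictMono g) (h : ∀ l, σ₁ (f l) = σ₂ (g l)) : k ≤ lcsLen σ₁ σ₂ := by
  refine le_csSup ⟨n, ?_⟩ ⟨f, g, hf, hg, h⟩
  rintro m ⟨f', -, hf', -, -⟩
  simpa using Fintype.card_le_of_injective f' hf'.injective

lemma lcsLen_le_lcsLen_add_card {σ₁ ρ : Perm (Fin n)} (σ₂ : Perm (Fin n)) (D : Finset (Fin n))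
    (hD : ∀ x ∉ D, σ₁ x = ρ x) : lcsLen σ₁ σ₂ ≤ lcsLen ρ σ₂ + #D := by
  refine csSup_le' ?_
  rintro L ⟨f, g, hf, hg, h⟩
  set T : Finset (Fin L) := univ.filter (f · ∈ D)
  have hT : #T ≤ #D :=
    card_le_card_of_injOn f (fun l hl => (mem_filter.mp hl).2) hf.injective.injOn
  let e := Tᶜ.orderEmbOfFin rfl
  have hkept : ∀ l, f (e l) ∉ D := fun l hl =>
    (mem_compl.mp (Tᶜ.orderEmbOfFin_mem rfl l)) (mem_filter.mpr ⟨mem_univ _, hl⟩)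
  have hTc : #Tᶜ ≤ lcsLen ρ σ₂ :=
    le_lcsLen (hf.comp e.strictMono) (hg.comp e.strictMono)
      fun l => (hD _ (hkept l)).symm.trans (h (e l))
  have := card_compl_add_card T
  simp only [Fintype.card_fin] at this
  omega

lemma abs_lcsLen_sub_lcsLen_le_card {σ₁ ρ : Perm (Fin n)} (σ₂ : Perm (Fin n)) (D : Finset (Fin n))
    (hD : ∀ x ∉ D, σ₁ x = ρ x) : |(lcsLen σ₁ σ₂ : ℤ) - lcsLen ρ σ₂| ≤ #D := by
  have h₁ := lcsLen_le_lcsLen_add_card σ₂ D hD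
  have h₂ := lcsLen_le_lcsLen_add_card σ₂ D fun x hx => (hD x hx).symm
  rw [abs_sub_le_iff]
  omega

end lcsLen

theorem abs_lcs_sub_lcs_merge_le_numCycles_general
    (n : ℕ) (σ₁ σ₂ : Equiv.Perm (Fin n))
    (i : Fin (numCycles σ₁) → Fin n)
    (hk : 0 < numCycles σ₁)
    (ρ : Equiv.Perm (Fin n))
    (hρ : ρ = σ₁ * (((List.finRange (numCycles σ₁)).drop 1).map
      fun j => Equiv.swap (i ⟨0, hk⟩) (i j)).prod) :
    |(lcsLen σ₁ σ₂ : ℤ) - (lcsLen ρ σ₂ : ℤ)| ≤ (numCycles σ₁ : ℤ) := by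
  have hagree : ∀ x ∉ univ.image i, σ₁ x = ρ x := by
    intro x hx
    have hne : ∀ j, x ≠ i j := fun j hj => hx (mem_image.mpr ⟨j, mem_univ j, hj.symm⟩)
    rw [hρ, Perm.mul_apply, Perm.list_prod_apply_eq_self]
    simp only [List.mem_map]
    rintro _ ⟨j, -, rfl⟩
    exact swap_apply_of_ne_of_ne (hne _) (hne _)
  calc |(lcsLen σ₁ σ₂ : ℤ) - lcsLen ρ σ₂| ≤ #(univ.image i) :=
        abs_lcsLen_sub_lcsLen_le_card σ₂ _ hagree
    _ ≤ numCycles σ₁ := by exact_mod_cast card_image_le.trans (card_fin _).le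

/-- Let `σ₁, σ₂` be permutations of `{1,…,n}`, `k = #(σ₁)`, `i₁,…,i_k` distinct elements,
and `ρ = σ₁∘(i₁,i₂)∘(i₁,i₃)∘…∘(i₁,i_k)`. Then `|LCS(σ₁,σ₂) − LCS(ρ,σ₂)| ≤ #(σ₁)`. -/
theorem abs_lcs_sub_lcs_merge_le_numCycles
    (n : ℕ) (σ₁ σ₂ : Equiv.Perm (Fin n))
    (i : Fin (numCycles σ₁) → Fin n) (hi : Function.Injective i)
    (hk : 0 < numCycles σ₁)
    (ρ : Equiv.Perm (Fin n))
    (hρ : ρ = σ₁ * (((List.finRange (numCycles σ₁)).drop 1).map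
      fun j => Equiv.swap (i ⟨0, hk⟩) (i j)).prod) :
    |(lcsLen σ₁ σ₂ : ℤ) - (lcsLen ρ σ₂ : ℤ)| ≤ (numCycles σ₁ : ℤ) :=
  abs_lcs_sub_lcs_merge_le_numCycles_general n σ₁ σ₂ i hk ρ hρ
end

section
/- For any permutation σ of {1,…,n}, the number of fixed points of σ² satisfies card(fix(σ²)) ≥ 6·#(σ) − 3·card(fix(σ)) − 2n. -/
def fixCount {n : ℕ} (σ : Equiv.Perm (Fin n)) : ℕ :=
  (Finset.univ.filter fun x => σ x = x).card

open Finset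

theorem Multiset.three_mul_card_le_sum_add_count_two (s : Multiset ℕ) (hs : ∀ x ∈ s, 2 ≤ x) :
    3 * Multiset.card s ≤ s.sum + s.count 2 := by
  induction s using Multiset.induction with
  | empty => simp
  | cons a s ih =>
    have ha : 2 ≤ a := hs a (Multiset.mem_cons_self a s)
    have ih := ih fun x hx => hs x (Multiset.mem_cons_of_mem hx)
    rw [Multiset.card_cons, Multiset.sum_cons, Multiset.count_cons]
    split_ifs <;> omega

namespace Equiv.Perm

variable {α : Type*} [Fintype α] [DecidableEq α]

theorem three_mul_card_cycleType_le (σ : Perm α) :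
    3 * Multiset.card σ.cycleType ≤ #σ.support + σ.cycleType.count 2 :=
  σ.sum_cycleType ▸ σ.cycleType.three_mul_card_le_sum_add_count_two
    fun _ => two_le_of_mem_cycleType

theorem card_support_add_card_fixed (σ : Perm α) :
    #σ.support + #{x | σ x = x} = Fintype.card α := by
  rw [support, ← card_univ]
  simpa only [not_not] using card_filter_add_card_filter_not (s := univ) fun x => σ x ≠ x

theorem count_two_cycleType_eq_card_filter (σ : Perm α) :
    σ.cycleType.count 2 = #{c ∈ σ.cycleFactorsFinset | #c.support = 2} := by
  rw [cycleType_def, Multiset.count_map, card_def, filter_val]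
  exact congrArg Multiset.card (Multiset.filter_congr fun _ _ => eq_comm)

theorem apply_apply_eq_self_of_mem_support_of_card_support_eq_two {σ c : Perm α}
    (hc : c ∈ σ.cycleFactorsFinset) (hc2 : #c.support = 2) {x : α} (hx : x ∈ c.support) :
    σ (σ x) = x := by
  have hsq : c ^ 2 = 1 := by
    rw [← hc2, ← (mem_cycleFactorsFinset_iff.mp hc).1.orderOf, pow_orderOf_eq_one]
  rw [cycle_is_cycleOf hx hc] at hsq
  simpa [hsq, sq] using (σ.cycleOf_pow_apply_self x 2).symm

theorem two_mul_count_two_cycleType_le (σ : Perm α) :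
    2 * σ.cycleType.count 2 ≤ #{x | σ x ≠ x ∧ σ (σ x) = x} := by
  set F := {c ∈ σ.cycleFactorsFinset | #c.support = 2}
  have hdisj : (F : Set (Perm α)).PairwiseDisjoint support := fun c hc d hd hcd =>
    (σ.cycleFactorsFinset_pairwise_disjoint (mem_filter.mp hc).1 (mem_filter.mp hd).1
      hcd).disjoint_support
  have hsub : F.biUnion support ⊆ ({x | σ x ≠ x ∧ σ (σ x) = x} : Finset α) := by
    intro x hx
    obtain ⟨c, hc, hxc⟩ := mem_biUnion.mp hx
    obtain ⟨hcσ, hc2⟩ := mem_filter.mp hc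
    exact mem_filter.mpr ⟨mem_univ x, mem_support.mp (mem_cycleFactorsFinset_support_le hcσ hxc),
      apply_apply_eq_self_of_mem_support_of_card_support_eq_two hcσ hc2 hxc⟩
  calc 2 * σ.cycleType.count 2 = ∑ c ∈ F, #c.support := by
        rw [count_two_cycleType_eq_card_filter, sum_congr rfl fun c hc => (mem_filter.mp hc).2,
          sum_const, smul_eq_mul, mul_comm]
    _ = #(F.biUnion support) := (card_biUnion hdisj).symm
    _ ≤ _ := card_le_card hsub

theorem card_fixed_add_two_mul_count_two_cycleType_le (σ : Perm α) :
    #{x | σ x = x} + 2 * σ.cycleType.count 2 ≤ #{x | σ (σ x) = x} := by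
  set fixed : Finset α := {x | σ x = x}
  set swapped : Finset α := {x | σ x ≠ x ∧ σ (σ x) = x}
  calc #fixed + 2 * σ.cycleType.count 2
      ≤ #fixed + #swapped := Nat.add_le_add_left σ.two_mul_count_two_cycleType_le _
    _ = #(fixed ∪ swapped) :=
        (card_union_of_disjoint (disjoint_filter.mpr fun _ _ h h' => h'.1 h)).symm
    _ ≤ #{x | σ (σ x) = x} := card_le_card fun x hx => by
        rcases mem_union.mp hx with h | h <;> simp_all [fixed, swapped]

end Equiv.Perm

/-- For any permutation `σ` of `{1,…,n}`,
`card(fix(σ²)) ≥ 6·#(σ) − 3·card(fix(σ)) − 2n`. -/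
theorem fixCount_sq_ge (n : ℕ) (σ : Equiv.Perm (Fin n)) :
    6 * (numCycles σ : ℤ) - 3 * (fixCount σ : ℤ) - 2 * (n : ℤ) ≤ (fixCount (σ * σ) : ℤ) := by
  have hcard := σ.card_support_add_card_fixed
  have hcycles := σ.three_mul_card_cycleType_le
  have hsq := σ.card_fixed_add_two_mul_count_two_cycleType_le
  rw [Fintype.card_fin] at hcard
  have hfix_sq : fixCount (σ * σ) = #{x | σ (σ x) = x} := rfl
  rw [hfix_sq, numCycles, fixCount]
  omega
end

section
/- Let n ≥ 2 and let σ₁, σ₂ be independent random permutations of {1,…,n}, each with distribution invariant under conjugation. Writing p₁ = P(σ₁(1)=1) and p₂ = P(σ₂(1)=1), one has P(σ₁⁻¹∘σ₂(1) = 1) = p₁p₂ + (1−p₁)(1−p₂)/(n−1). -/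
/-!
Write `q(a, b)` for the probability that a random permutation maps `a` to `b`. Conjugating by the
transposition `(b b')` fixes `a` and exchanges the events `σ a = b` and `σ a = b'`, so for a
conjugation-invariant law `q(a, b)` is the same for all `b ≠ a`, hence equal to
`(1 - q(a, a)) / (n - 1)`. By independence, `σ₁⁻¹ σ₂` fixes `a` with probability
`∑_b q₁(a, b) q₂(a, b)`, and splitting off the term `b = a` gives the formula.
-/

/-- For a probability mass function `p` on permutations of `{1,…,n}`, the probability that the
permutation fixes the first element (`σ(1) = 1`). -/
noncomputable def probFixOne {n : ℕ} (p : Equiv.Perm (Fin n) → ℝ) : ℝ :=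
  ∑ σ : Equiv.Perm (Fin n), if ∀ x : Fin n, (x : ℕ) = 0 → σ x = x then p σ else 0

open Equiv Finset

section MapsTo

variable {α : Type*} [Fintype α] [DecidableEq α]

noncomputable def probMapsTo (p : Perm α → ℝ) (a b : α) : ℝ :=
  ∑ σ : Perm α, if σ a = b then p σ else 0

lemma sum_probMapsTo (p : Perm α → ℝ) (a : α) :
    ∑ b, probMapsTo p a b = ∑ σ, p σ := by
  unfold probMapsTo
  rw [sum_comm]
  simp only [sum_ite_eq, mem_univ, if_true]

lemma probMapsTo_eq_of_conj_invariant {p : Perm α → ℝ}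
    (hinv : ∀ ρ σ : Perm α, p (ρ * σ * ρ⁻¹) = p σ) {a b b' : α} (hb : b ≠ a) (hb' : b' ≠ a) :
    probMapsTo p a b = probMapsTo p a b' := by
  have hfix : (swap b b')⁻¹ a = a := by
    rw [swap_inv]; exact swap_apply_of_ne_of_ne hb.symm hb'.symm
  refine (Fintype.sum_equiv (MulAut.conj (swap b b')).toEquiv _ _ fun σ => ?_).symm
  simp only [MulEquiv.toEquiv_eq_coe, EquivLike.coe_coe, MulAut.conj_apply, hinv,
    Perm.mul_apply, hfix, swap_apply_eq_iff, swap_apply_left]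

lemma cast_card_univ_erase (a : α) : ((univ.erase a).card : ℝ) = Fintype.card α - 1 := by
  rw [card_erase_of_mem (mem_univ a), card_univ, Nat.cast_sub (Fintype.card_pos_iff.mpr ⟨a⟩),
    Nat.cast_one]

lemma probMapsTo_of_ne {p : Perm α → ℝ} (hsum : ∑ σ, p σ = 1)
    (hinv : ∀ ρ σ : Perm α, p (ρ * σ * ρ⁻¹) = p σ) {a b : α} (hb : b ≠ a) :
    probMapsTo p a b = (1 - probMapsTo p a a) / (Fintype.card α - 1) := by
  have hcard_ne : (Fintype.card α : ℝ) - 1 ≠ 0 := by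
    rw [← cast_card_univ_erase a, Nat.cast_ne_zero, card_ne_zero]
    exact ⟨b, mem_erase.mpr ⟨hb, mem_univ b⟩⟩
  have hrest : ∑ b' ∈ univ.erase a, probMapsTo p a b' = 1 - probMapsTo p a a := by
    rw [sum_erase_eq_sub (mem_univ a), sum_probMapsTo, hsum]
  rw [sum_congr rfl fun b' hb' =>
    probMapsTo_eq_of_conj_invariant hinv (ne_of_mem_erase hb') hb, sum_const, nsmul_eq_mul,
    cast_card_univ_erase] at hrest
  rw [eq_div_iff hcard_ne, ← hrest, mul_comm]

lemma sum_probMapsTo_mul_probMapsTo {p₁ p₂ : Perm α → ℝ}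
    (h₁sum : ∑ σ, p₁ σ = 1) (h₁inv : ∀ ρ σ : Perm α, p₁ (ρ * σ * ρ⁻¹) = p₁ σ)
    (h₂sum : ∑ σ, p₂ σ = 1) (h₂inv : ∀ ρ σ : Perm α, p₂ (ρ * σ * ρ⁻¹) = p₂ σ) (a : α) :
    ∑ b, probMapsTo p₁ a b * probMapsTo p₂ a b =
      probMapsTo p₁ a a * probMapsTo p₂ a a +
        (1 - probMapsTo p₁ a a) * (1 - probMapsTo p₂ a a) / (Fintype.card α - 1) := by
  rw [← add_sum_erase _ _ (mem_univ a), sum_congr rfl fun b hb => by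
    rw [probMapsTo_of_ne h₁sum h₁inv (ne_of_mem_erase hb),
      probMapsTo_of_ne h₂sum h₂inv (ne_of_mem_erase hb)],
    sum_const, nsmul_eq_mul, cast_card_univ_erase]
  congr 1
  -- for a singleton `α` both sides are `0`, the right one through division by zero
  rcases eq_or_ne ((Fintype.card α : ℝ) - 1) 0 with h | h
  · simp [h]
  · field_simp

lemma sum_sum_ite_inv_mul_apply_eq (p₁ p₂ : Perm α → ℝ) (a : α) :
    ∑ σ₁ : Perm α, ∑ σ₂ : Perm α, (if (σ₁⁻¹ * σ₂) a = a then p₁ σ₁ * p₂ σ₂ else 0) =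
      ∑ b, probMapsTo p₁ a b * probMapsTo p₂ a b := by
  calc _ = ∑ σ₁ : Perm α, p₁ σ₁ * probMapsTo p₂ a (σ₁ a) := by
        refine sum_congr rfl fun σ₁ _ => ?_
        simp only [probMapsTo, mul_sum, mul_ite, mul_zero, Perm.mul_apply, Perm.inv_eq_iff_eq]
    _ = ∑ σ₁ : Perm α, ∑ b, if σ₁ a = b then p₁ σ₁ * probMapsTo p₂ a b else 0 := by
        simp only [sum_ite_eq, mem_univ, if_true]
    _ = _ := by
        rw [sum_comm]
        simp only [probMapsTo, sum_mul, ite_mul, zero_mul]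

end MapsTo

/-- Let `n ≥ 2` and let `σ₁, σ₂` be independent random permutations of `{1,…,n}`, each
invariant under conjugation. With `p₁ = P(σ₁(1)=1)` and `p₂ = P(σ₂(1)=1)`, one has
`P(σ₁⁻¹∘σ₂(1)=1) = p₁p₂ + (1−p₁)(1−p₂)/(n−1)`. -/
theorem prob_inv_comp_fixes_one
    (n : ℕ) (hn : 2 ≤ n)
    (p₁ p₂ : Equiv.Perm (Fin n) → ℝ)
    (h₁sum : ∑ σ : Equiv.Perm (Fin n), p₁ σ = 1)
    (h₁inv : ∀ ρ σ : Equiv.Perm (Fin n), p₁ (ρ * σ * ρ⁻¹) = p₁ σ)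
    (h₂sum : ∑ σ : Equiv.Perm (Fin n), p₂ σ = 1)
    (h₂inv : ∀ ρ σ : Equiv.Perm (Fin n), p₂ (ρ * σ * ρ⁻¹) = p₂ σ) :
    (∑ σ₁ : Equiv.Perm (Fin n), ∑ σ₂ : Equiv.Perm (Fin n),
        if (σ₁⁻¹ * σ₂) ⟨0, by omega⟩ = (⟨0, by omega⟩ : Fin n) then p₁ σ₁ * p₂ σ₂ else 0)
      = probFixOne p₁ * probFixOne p₂ +
        (1 - probFixOne p₁) * (1 - probFixOne p₂) / ((n : ℝ) - 1) := by
  set a : Fin n := ⟨0, by omega⟩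
  have hfix : ∀ p : Perm (Fin n) → ℝ, probFixOne p = probMapsTo p a a := fun p =>
    sum_congr rfl fun σ _ => by
      congr 1
      exact propext ⟨fun h => h a rfl, fun h x hx => (Fin.ext hx : x = a) ▸ h⟩
  rw [sum_sum_ite_inv_mul_apply_eq, sum_probMapsTo_mul_probMapsTo h₁sum h₁inv h₂sum h₂inv,
    hfix, hfix, Fintype.card_fin]
end
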